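/- arXiv:0905.2674 — 3 statements merged into one kernel-verified Lean document; each statement's English description precedes it below -/
import Mathlib

section
/- Let G be a finite group that contains a normal subgroup A such that C_G(A) ≤ A and such that [A, x] is contained in the center Z(A) of A for every small element x of G. Then M(G) is nilpotent of nilpotency class at most 3. -/
/-- The size of the conjugacy class of `x` in `G`. -/
noncomputable def classCard {G : Type*} [Group G] (x : G) : ℕ := Nat.card (conjugatesOf x)

/-- An element `x` is *small* if its conjugacy class size is among the two smallest
conjugacy class sizes of `G`, i.e. at most one conjugacy class size is strictly
smaller than that of `x`. -/
def IsSmall {G : Type*} [Group G] (x : G) : Prop :=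
  {n : ℕ | (∃ g : G, classCard g = n) ∧ n < classCard x}.Subsingleton

/-- `M G` is the subgroup generated by all small elements of `G`. -/
def smallGen (G : Type*) [Group G] : Subgroup G := Subgroup.closure {x : G | IsSmall x}

/-- `[x, K] = {x⁻¹k⁻¹xk : k ∈ K}`. -/
def commSet {G : Type*} [Group G] (x : G) (K : Set G) : Set G :=
  {y | ∃ k ∈ K, y = x⁻¹ * k⁻¹ * x * k}

/-- `[A, x] = {a⁻¹x⁻¹ax : a ∈ A}`. -/
def commSet' {G : Type*} [Group G] (A : Set G) (x : G) : Set G :=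
  {y | ∃ a ∈ A, y = a⁻¹ * x⁻¹ * a * x}

/-- `S` is a normal subset of `K`: `k⁻¹Sk = S` for all `k ∈ K`. -/
def IsNormalSubsetOf {G : Type*} [Group G] (S K : Set G) : Prop :=
  ∀ k ∈ K, (fun s => k⁻¹ * s * k) '' S = S

/-- The Fitting subgroup: the join of all nilpotent normal subgroups (for a finite
group, its largest nilpotent normal subgroup). -/
def fittingSubgroup (G : Type*) [Group G] : Subgroup G :=
  ⨆ H ∈ {H : Subgroup G | H.Normal ∧ Group.IsNilpotent ↥H}, H

/-! For a small element `x`, the hypothesis makes `b ↦ [b, x]` a homomorphism on `A` whose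
image `U` is normalized by `C_G(x)`. If some `u = [a, x]` were not central, the
`C_G(x)`-conjugates of `u` would lie in `U \ {1}`, so `|C_G(x) : C_G(x) ∩ C_G(u)| < |U| =
|A : C_A(x)|`; but the subgroup `(C_G(x) ∩ C_G(u))A ≤ C_G(u)` and the minimality of
`|G : C_G(x)|` among noncentral elements force the reverse inequality. Hence `[A, M] ≤ Z(G)`
for `M = M(G)`. The three subgroups lemma then gives `[M, M, A] = 1`, so `[M, M] ≤ C_G(A) ≤ A`
and `[M, M, M] ≤ [A, M] ≤ Z(G)`. -/

open Subgroup
open scoped commutatorElement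

section

variable {G : Type*} [Group G]

theorem classCard_eq_index (x : G) : classCard x = (centralizer {x}).index := by
  have horbit : conjugatesOf x = MulAction.orbit (ConjAct G) x := by
    ext y
    exact isConj_comm.trans ConjAct.mem_orbit_conjAct.symm
  rw [classCard, horbit, Nat.card_coe_set_eq, ← MulAction.index_stabilizer,
    centralizer_eq_comap_stabilizer]
  exact (index_comap_of_surjective _ ConjAct.toConjAct.surjective).symm

theorem classCard_eq_one_iff {u : G} : classCard u = 1 ↔ u ∈ center G := by
  rw [classCard_eq_index, index_eq_one, centralizer_eq_top_iff_subset, Set.singleton_subset_iff]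
  rfl

theorem IsSmall.classCard_le [Finite G] {x u : G} (hx : IsSmall x) (hu : u ∉ center G) :
    classCard x ≤ classCard u := by
  by_contra! hlt
  have hu_ne : classCard u ≠ 0 := by
    rw [classCard_eq_index]; exact index_ne_zero_of_finite
  have hone : classCard (1 : G) = 1 := classCard_eq_one_iff.mpr (one_mem _)
  exact hu (classCard_eq_one_iff.mp (hx ⟨⟨u, rfl⟩, hlt⟩ ⟨⟨1, hone⟩, by omega⟩))

theorem Subgroup.relIndex_sup_eq_relIndex_of_normal [Finite G] (H K : Subgroup G) [K.Normal] :
    H.relIndex (H ⊔ K) = H.relIndex K := by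
  have h1 := relIndex_mul_relIndex (H ⊓ K) H (H ⊔ K) inf_le_left le_sup_left
  have h2 := relIndex_mul_relIndex (H ⊓ K) K (H ⊔ K) inf_le_right le_sup_right
  rw [relIndex_sup_right, ← h1, inf_relIndex_left, mul_comm] at h2
  rw [← inf_relIndex_right H K]
  exact (Nat.eq_of_mul_eq_mul_left
    (Nat.pos_of_ne_zero (K.subgroupOf H).index_ne_zero_of_finite) h2).symm

theorem Subgroup.relIndex_le_relIndex_of_index_le [Finite G] {D H K : Subgroup G} (hH : D ≤ H)
    (hK : D ≤ K) (hHK : H.index ≤ K.index) : D.relIndex K ≤ D.relIndex H := by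
  refine Nat.le_of_mul_le_mul_right ?_ (Nat.pos_of_ne_zero (index_ne_zero_of_finite (H := K)))
  calc D.relIndex K * K.index = D.relIndex H * H.index :=
        (relIndex_mul_index hK).trans (relIndex_mul_index hH).symm
    _ ≤ D.relIndex H * K.index := Nat.mul_le_mul_left _ hHK

theorem Subgroup.relIndex_centralizer_le_card [Finite G] (H : Subgroup G) {u : G} {S : Set G}
    (hS : ∀ h ∈ H, h * u * h⁻¹ ∈ S) : (centralizer {u}).relIndex H ≤ Nat.card S := by
  -- `H` acting on `G` by conjugation, in place of the action by left multiplication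
  let _ : MulAction H G := MulAction.compHom G (MulAut.conj.comp H.subtype)
  have hstab : MulAction.stabilizer H u = (centralizer {u}).subgroupOf H := by
    ext h
    rw [MulAction.mem_stabilizer_iff, mem_subgroupOf, mem_centralizer_singleton_iff]
    show (h : G) * u * (h : G)⁻¹ = u ↔ _
    rw [mul_inv_eq_iff_eq_mul]
  rw [relIndex, ← hstab, MulAction.index_stabilizer, Nat.card_coe_set_eq]
  refine Set.ncard_le_ncard ?_
  rintro _ ⟨h, rfl⟩
  exact hS h h.2

theorem Subgroup.Normal.commutatorElement_mem_left {A : Subgroup G} (hA : A.Normal) {a : G}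
    (ha : a ∈ A) (x : G) : ⁅a, x⁆ ∈ A := by
  rw [commutatorElement_def, mul_assoc, mul_assoc]
  exact mul_mem ha (by simpa only [mul_assoc] using hA.conj_mem _ (inv_mem ha) x)

def commutatorHom {A : Subgroup G} (hA : A.Normal) (x : G)
    (hx : ∀ a ∈ A, ⁅a, x⁆ ∈ centralizer (A : Set G)) : A →* G where
  toFun b := ⁅(b : G), x⁆
  map_one' := commutatorElement_one_left x
  map_mul' b c := by
    have hb : (b : G) * ⁅(c : G), x⁆ = ⁅(c : G), x⁆ * b :=
      mem_centralizer_iff.mp (hx c c.2) b b.2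
    have hbc : ⁅(b : G), x⁆ * ⁅(c : G), x⁆ = ⁅(c : G), x⁆ * ⁅(b : G), x⁆ :=
      mem_centralizer_iff.mp (hx c c.2) _ (hA.commutatorElement_mem_left b.2 x)
    calc ⁅((b * c : A) : G), x⁆ = b * ⁅(c : G), x⁆ * (b : G)⁻¹ * ⁅(b : G), x⁆ := by
          simp only [commutatorElement_def, coe_mul]; group
      _ = ⁅(b : G), x⁆ * ⁅(c : G), x⁆ := by rw [hb, hbc]; group

theorem ker_commutatorHom {A : Subgroup G} (hA : A.Normal) (x : G)
    (hx : ∀ a ∈ A, ⁅a, x⁆ ∈ centralizer (A : Set G)) :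
    (commutatorHom hA x hx).ker = (centralizer {x}).subgroupOf A := by
  ext b
  rw [MonoidHom.mem_ker, mem_subgroupOf, mem_centralizer_singleton_iff]
  exact commutatorElement_eq_one_iff_commute

theorem commutatorElement_mem_center_of_index_le [Finite G] {A : Subgroup G} (hA : A.Normal)
    {x : G} (hmin : ∀ u ∉ center G, (centralizer {x}).index ≤ (centralizer {u}).index)
    (hAx : ∀ a ∈ A, ⁅a, x⁆ ∈ centralizer (A : Set G)) {a : G} (ha : a ∈ A) :
    ⁅a, x⁆ ∈ center G := by
  by_contra hu
  set φ := commutatorHom hA x hAx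
  set u := ⁅a, x⁆
  set Cx := centralizer {x}
  set Cu := centralizer {u}
  have hACu : A ≤ Cu := fun b hb =>
    mem_centralizer_singleton_iff.mpr (mem_centralizer_iff.mp (hAx a ha) b hb)
  have hrange : Nat.card φ.range = Cx.relIndex A := by
    rw [← index_ker, ker_commutatorHom]; rfl
  have horbit : Cu.relIndex Cx < Nat.card φ.range := by
    refine (relIndex_centralizer_le_card Cx (S := (φ.range : Set G) \ {1}) fun c hc =>
      ⟨⟨⟨c * a * c⁻¹, hA.conj_mem a ha c⟩, ?_⟩, ?_⟩).trans_lt ?_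
    · show ⁅c * a * c⁻¹, x⁆ = c * u * c⁻¹
      rw [conjugate_commutatorElement, mem_centralizer_singleton_iff.mp hc, mul_inv_cancel_right]
    · rw [Set.mem_singleton_iff, conj_eq_one_iff]
      exact fun h => hu (h ▸ one_mem _)
    · rw [Nat.card_coe_set_eq]
      exact (Set.ncard_sdiff_singleton_lt_of_mem (one_mem φ.range)).trans_eq
        (Nat.card_coe_set_eq _).symm
  have hsup : (Cx ⊓ Cu).relIndex (Cx ⊓ Cu ⊔ A) = Cx.relIndex A := by
    rw [relIndex_sup_eq_relIndex_of_normal, ← relIndex_inf_mul_relIndex, inf_eq_right.mpr hACu,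
      relIndex_eq_one.mpr hACu, mul_one]
  have hle : (Cx ⊓ Cu).relIndex (Cx ⊓ Cu ⊔ A) ≤ Cu.relIndex Cx := by
    rw [← inf_relIndex_left Cx Cu]
    exact relIndex_le_relIndex_of_index_le inf_le_left le_sup_left
      ((hmin u hu).trans (index_antitone (sup_le inf_le_right hACu)))
  omega

theorem commutatorElement_mem_centralizer_of_commSet'_subset {A : Subgroup G} (hA : A.Normal)
    {x : G} (h : commSet' (A : Set G) x ⊆ ((center A).map A.subtype : Set G)) {a : G}
    (ha : a ∈ A) : ⁅a, x⁆ ∈ centralizer (A : Set G) := by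
  have hcenter : (center A).map A.subtype ≤ centralizer (A : Set G) := by
    rintro _ ⟨z, hz, rfl⟩ b hb
    exact congrArg Subtype.val (mem_center_iff.mp hz ⟨b, hb⟩)
  -- `⁅a, x⁆⁻¹` is the element `c⁻¹ x⁻¹ c x` of `commSet' A x` with `c = x a⁻¹ x⁻¹`
  have hmem :
      (x * a⁻¹ * x⁻¹)⁻¹ * x⁻¹ * (x * a⁻¹ * x⁻¹) * x ∈ centralizer (A : Set G) :=
    hcenter (h ⟨x * a⁻¹ * x⁻¹, hA.conj_mem _ (inv_mem ha) x, rfl⟩)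
  convert inv_mem hmem using 1
  rw [commutatorElement_def]
  group

theorem Subgroup.commutator_closure_le_of_forall_mem {A N : Subgroup G} [N.Normal] {S : Set G}
    (h : ∀ a ∈ A, ∀ s ∈ S, ⁅a, s⁆ ∈ N) : ⁅A, closure S⁆ ≤ N := by
  let π := QuotientGroup.mk' N
  have hcomm : ∀ {a g}, ⁅a, g⁆ ∈ N ↔ π a * π g = π g * π a := by
    intro a g
    rw [← QuotientGroup.eq_one_iff, ← QuotientGroup.mk'_apply, map_commutatorElement,
      commutatorElement_eq_one_iff_commute]
    rfl
  have hS : closure S ≤ (centralizer (A.map π : Set (G ⧸ N))).comap π := by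
    rw [closure_le]
    rintro s hs _ ⟨a, ha, rfl⟩
    exact hcomm.mp (h a ha s hs)
  rw [commutator_le]
  exact fun a ha m hm => hcomm.mpr (hS hm (π a) ⟨a, ha, rfl⟩)

theorem Subgroup.lowerCentralSeries_three_eq_bot_of_commutator_le_center {A M : Subgroup G}
    (hC : centralizer (A : Set G) ≤ A) (hAM : ⁅A, M⁆ ≤ center G) :
    M.lowerCentralSeries 3 = ⊥ := by
  have hcentral : ∀ {H : Subgroup G}, H ≤ center G → ⁅H, M⁆ = ⊥ := fun hH =>
    commutator_eq_bot_iff_le_centralizer.mpr (hH.trans (center_le_centralizer _))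
  have hMMA : ⁅⁅M, M⁆, A⁆ = ⊥ :=
    commutator_commutator_eq_bot_of_rotate (hcentral (commutator_comm M A ▸ hAM)) (hcentral hAM)
  have hMM : ⁅M, M⁆ ≤ A := (commutator_eq_bot_iff_le_centralizer.mp hMMA).trans hC
  exact hcentral ((commutator_mono hMM le_rfl).trans hAM)

end

/-- If a finite group `G` has a normal subgroup `A` with `C_G(A) ≤ A` such that
`[A, x] ⊆ Z(A)` for every small element `x` of `G`, then `M(G)` is nilpotent of
class at most `3`. -/
theorem stmt_1 {G : Type*} [Group G] [Finite G] (A : Subgroup G) (hA : A.Normal)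
    (hC : Subgroup.centralizer (A : Set G) ≤ A)
    (hZ : ∀ x : G, IsSmall x →
      commSet' (A : Set G) x ⊆ ((Subgroup.center ↥A).map A.subtype : Set G)) :
    Group.IsNilpotent ↥(smallGen G) ∧ (⊤ : Subgroup ↥(smallGen G)).lowerCentralSeries 3 = ⊥ := by
  have hcenter : ∀ a ∈ A, ∀ x ∈ {x : G | IsSmall x}, ⁅a, x⁆ ∈ center G :=
    fun a ha x hx => commutatorElement_mem_center_of_index_le hA
      (fun u hu => by simpa only [classCard_eq_index] using hx.classCard_le hu)
      (fun b hb => commutatorElement_mem_centralizer_of_commSet'_subset hA (hZ x hx) hb) ha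
  have h3 : (smallGen G).lowerCentralSeries 3 = ⊥ :=
    lowerCentralSeries_three_eq_bot_of_commutator_le_center hC
      (commutator_closure_le_of_forall_mem hcenter)
  refine ⟨isNilpotent_of_lowerCentralSeries_eq_bot h3, ?_⟩
  rwa [← map_subtype_inj, Subgroup.map_bot, top_subtype_lowerCentralSeries]
end

section
/- Let G be a finite group such that C_G(F(G)) ≤ F(G), and let Ḡ = G/Z(G). Then C_Ḡ(F(Ḡ)) ≤ F(Ḡ), i.e., the centralizer of the Fitting subgroup of G/Z(G) is contained in the Fitting subgroup of G/Z(G). -/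
/-!
Let `D = C_Ḡ(F(Ḡ))` and let `C, K ≤ G` be the preimages of `D` and `F(Ḡ)`. Since
`[D, F(Ḡ)] = 1`, we have `[C, K] ≤ Z(G)`, so the three subgroups lemma gives `[[C, C], K] = 1`.
As `F(G) ≤ K`, this puts `[C, C]` inside `C_G(F(G)) ≤ F(G)`, and projecting gives
`[D, D] ≤ F(Ḡ)`. Because `D` centralizes `F(Ḡ)`, the group `D` is then nilpotent of class at
most `2`; being normal, it lies in `F(Ḡ)`.
-/

open Subgroup

section

variable {G Q : Type*} [Group G] [Group Q]

theorem le_fittingSubgroup {H : Subgroup G} (hN : H.Normal) (hH : Group.IsNilpotent H) :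
    H ≤ fittingSubgroup G :=
  le_biSup id (show H ∈ {H : Subgroup G | H.Normal ∧ Group.IsNilpotent H} from ⟨hN, hH⟩)

instance fittingSubgroup_normal : (fittingSubgroup G).Normal :=
  biSup_normal _ id fun _ hH => hH.1

theorem map_fittingSubgroup_le {f : G →* Q} (hf : Function.Surjective f) :
    (fittingSubgroup G).map f ≤ fittingSubgroup Q := by
  simp only [fittingSubgroup, Subgroup.map_iSup]
  exact iSup₂_le fun H ⟨hN, hH⟩ =>
    le_fittingSubgroup (hN.map f hf)
      (Group.nilpotent_of_surjective _ (f.subgroupMap_surjective H))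

theorem Subgroup.isNilpotent_of_commutator_le_centralizer {H : Subgroup G}
    (h : ⁅H, H⁆ ≤ centralizer H) : Group.IsNilpotent H := by
  refine isNilpotent_of_ker_le_center (Abelianization.of (G := H)) ?_
  rw [Abelianization.ker_of]
  intro x hx
  have hx' : (x : G) ∈ ⁅H, H⁆ := H.map_subtype_commutator ▸ mem_map_of_mem H.subtype hx
  exact mem_center_iff.mpr fun y => Subtype.ext (h hx' y y.2)

theorem Subgroup.commutator_commutator_eq_bot_of_commutator_le_center {A B : Subgroup G}
    (h : ⁅A, B⁆ ≤ center G) : ⁅⁅A, A⁆, B⁆ = ⊥ := by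
  have hZ : ∀ Z ≤ center G, ⁅Z, A⁆ = ⊥ := fun Z hZ =>
    commutator_eq_bot_iff_le_centralizer.mpr (hZ.trans (center_le_centralizer _))
  exact commutator_commutator_eq_bot_of_rotate (hZ _ h) (hZ _ (commutator_comm A B ▸ h))

theorem Subgroup.commutator_comap_le_ker (f : G →* Q) {A B : Subgroup Q} (h : ⁅A, B⁆ = ⊥) :
    ⁅A.comap f, B.comap f⁆ ≤ f.ker := by
  rw [← map_eq_bot_iff, map_commutator, eq_bot_iff, ← h]
  exact commutator_mono (map_comap_le f A) (map_comap_le f B)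

theorem commutator_le_fittingSubgroup_of_commutator_le_center
    (hF : centralizer (fittingSubgroup G : Set G) ≤ fittingSubgroup G) {A K : Subgroup G}
    (hK : fittingSubgroup G ≤ K) (hAK : ⁅A, K⁆ ≤ center G) : ⁅A, A⁆ ≤ fittingSubgroup G :=
  calc ⁅A, A⁆ ≤ centralizer K :=
        commutator_eq_bot_iff_le_centralizer.mp
          (commutator_commutator_eq_bot_of_commutator_le_center hAK)
    _ ≤ centralizer (fittingSubgroup G : Set G) := centralizer_le hK
    _ ≤ fittingSubgroup G := hF

end

theorem stmt_9_general {G : Type*} [Group G]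
    (hC : Subgroup.centralizer (fittingSubgroup G : Set G) ≤ fittingSubgroup G) :
    Subgroup.centralizer
        ((fittingSubgroup (G ⧸ Subgroup.center G)) : Set (G ⧸ Subgroup.center G)) ≤
      fittingSubgroup (G ⧸ Subgroup.center G) := by
  set π := QuotientGroup.mk' (center G)
  have hπ : Function.Surjective π := QuotientGroup.mk'_surjective _
  set F := fittingSubgroup (G ⧸ center G)
  set D := centralizer (F : Set (G ⧸ center G))
  have hCK : ⁅D.comap π, F.comap π⁆ ≤ center G :=
    (commutator_comap_le_ker π (commutator_eq_bot_iff_le_centralizer.mpr le_rfl)).trans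
      (QuotientGroup.ker_mk' _).le
  have hCC : ⁅D.comap π, D.comap π⁆ ≤ fittingSubgroup G :=
    commutator_le_fittingSubgroup_of_commutator_le_center hC
      (map_le_iff_le_comap.mp (map_fittingSubgroup_le hπ)) hCK
  have hDD : ⁅D, D⁆ ≤ F := by
    rw [← map_comap_eq_self_of_surjective hπ D, ← map_commutator]
    exact (map_mono hCC).trans (map_fittingSubgroup_le hπ)
  refine le_fittingSubgroup inferInstance (isNilpotent_of_commutator_le_centralizer ?_)
  exact hDD.trans (le_centralizer_iff.mp le_rfl)

/-- If `G` is a finite group with `C_G(F(G)) ≤ F(G)`, then the quotient `Ḡ = G/Z(G)`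
satisfies `C_Ḡ(F(Ḡ)) ≤ F(Ḡ)`. -/
theorem stmt_9 {G : Type*} [Group G] [Finite G]
    (hC : Subgroup.centralizer (fittingSubgroup G : Set G) ≤ fittingSubgroup G) :
    Subgroup.centralizer
        ((fittingSubgroup (G ⧸ Subgroup.center G)) : Set (G ⧸ Subgroup.center G)) ≤
      fittingSubgroup (G ⧸ Subgroup.center G) :=
  stmt_9_general hC
end

section
/- Let G be a finite group of conjugate rank 1 (all non-central elements have the same conjugacy class size) and let x ∈ G be a non-central element such that [x, G] is a normal subset of G. Then [x, G] ⊆ Z(G). -/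
/-!
Since `[x, g] = x⁻¹ (g⁻¹ x g)`, the set `[x, G]` is a left translate of the conjugacy class
of `x` and so has the same size. If some `c ∈ [x, G]` were non-central, normality of `[x, G]`
would put the class of `c` inside `[x, G]`, and conjugate rank 1 would make the two sets equally
large, hence equal. But `1 = [x, 1] ∈ [x, G]`, so `c` would be conjugate to `1`, i.e. `c = 1`.
-/

section CommSet

variable {G : Type*} [Group G]

theorem one_mem_commSet {x : G} {K : Set G} (hK : (1 : G) ∈ K) : (1 : G) ∈ commSet x K :=
  ⟨1, hK, by group⟩

theorem commSet_univ_eq_image_conjugatesOf (x : G) :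
    commSet x Set.univ = (x⁻¹ * ·) '' conjugatesOf x := by
  ext y
  constructor
  · rintro ⟨g, -, rfl⟩
    exact ⟨g⁻¹ * x * g, isConj_iff.mpr ⟨g⁻¹, by group⟩, by group⟩
  · rintro ⟨z, hz, rfl⟩
    obtain ⟨g, rfl⟩ := isConj_iff.mp hz
    exact ⟨g⁻¹, trivial, by group⟩

theorem ncard_commSet_univ (x : G) : (commSet x Set.univ).ncard = classCard x := by
  rw [commSet_univ_eq_image_conjugatesOf, Set.ncard_image_of_injective _ (mul_right_injective x⁻¹),
    classCard, Nat.card_coe_set_eq]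

theorem IsNormalSubsetOf.conjugatesOf_subset {S : Set G} (hS : IsNormalSubsetOf S Set.univ)
    {c : G} (hc : c ∈ S) : conjugatesOf c ⊆ S := by
  rintro y hy
  obtain ⟨k, rfl⟩ := isConj_iff.mp hy
  rw [← hS k⁻¹ trivial]
  exact ⟨c, hc, by group⟩

end CommSet

theorem stmt_12_general {G : Type*} [Group G] [Finite G]
    (hrank : ∀ x y : G, x ∉ Subgroup.center G → y ∉ Subgroup.center G →
      classCard x = classCard y)
    (x : G) (hx : x ∉ Subgroup.center G)
    (hns : IsNormalSubsetOf (commSet x Set.univ) Set.univ) :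
    commSet x Set.univ ⊆ (Subgroup.center G : Set G) := by
  intro c hc
  by_contra hcz
  have hclass : conjugatesOf c = commSet x Set.univ := by
    refine Set.eq_of_subset_of_ncard_le (hns.conjugatesOf_subset hc) ?_ (Set.toFinite _)
    rw [ncard_commSet_univ, ← Nat.card_coe_set_eq]
    exact (hrank c x hcz hx).ge
  have hc1 : (1 : G) ∈ conjugatesOf c := hclass ▸ one_mem_commSet (Set.mem_univ _)
  exact hcz (isConj_one_left.mp hc1 ▸ (Subgroup.center G).one_mem)

/-- In a finite group of conjugate rank `1`, if `x` is non-central and `[x, G]` is a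
normal subset of `G`, then `[x, G] ⊆ Z(G)`. -/
theorem stmt_12 {G : Type*} [Group G] [Finite G]
    (hna : ∃ a b : G, a * b ≠ b * a)
    (hrank : ∀ x y : G, x ∉ Subgroup.center G → y ∉ Subgroup.center G →
      classCard x = classCard y)
    (x : G) (hx : x ∉ Subgroup.center G)
    (hns : IsNormalSubsetOf (commSet x Set.univ) Set.univ) :
    commSet x Set.univ ⊆ (Subgroup.center G : Set G) :=
  stmt_12_general hrank x hx hns
end
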